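/- Let a group G act properly by isometries on a proper geodesic metric space (Y,d) with basepoint o, and let H ≤ G be a contracting subgroup, i.e. H is infinite and the orbit H·o is a contracting subset of Y. Then H has finite index in its normalizer N_G(H), and consequently N_G(H) is also a contracting subgroup. -/

import Mathlib

open Metric Set Filter

/-- A geodesic segment in a metric space, parametrized by arc length on `[0, len]`. -/
structure GeodesicSegment (Y : Type*) [MetricSpace Y] where
  len : ℝ
  len_nonneg : 0 ≤ len
  f : ℝ → Y
  isom : ∀ s ∈ Set.Icc (0 : ℝ) len, ∀ t ∈ Set.Icc (0 : ℝ) len, dist (f s) (f t) = |s - t|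

namespace GeodesicSegment

variable {Y : Type*} [MetricSpace Y]

/-- The initial point of a geodesic segment. -/
def source (γ : GeodesicSegment Y) : Y := γ.f 0

/-- The terminal point of a geodesic segment. -/
def target (γ : GeodesicSegment Y) : Y := γ.f γ.len

/-- The image of a geodesic segment. -/
def image (γ : GeodesicSegment Y) : Set Y := γ.f '' Set.Icc 0 γ.len

end GeodesicSegment

/-- A metric space is geodesic if any two points are joined by a geodesic segment. -/
def GeodesicSpace (Y : Type*) [MetricSpace Y] : Prop :=
  ∀ x y : Y, ∃ γ : GeodesicSegment Y, γ.source = x ∧ γ.target = y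

/-- Nearest-point projection of a point to a subset. -/
def proj {Y : Type*} [MetricSpace Y] (X : Set Y) (y : Y) : Set Y :=
  {x | x ∈ X ∧ dist y x = Metric.infDist y X}

/-- Nearest-point projection of a set to a subset. -/
def projSet {Y : Type*} [MetricSpace Y] (X A : Set Y) : Set Y :=
  ⋃ a ∈ A, proj X a

/-- `X` is `C`-contracting: any geodesic at distance at least `C` from `X`
has projection to `X` of diameter at most `C`. -/
def IsContractingWith {Y : Type*} [MetricSpace Y] (C : ℝ) (X : Set Y) : Prop :=
  ∀ γ : GeodesicSegment Y, (∀ p ∈ γ.image, C ≤ Metric.infDist p X) →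
    Metric.diam (projSet X γ.image) ≤ C

/-- `X` is contracting (with respect to geodesics). -/
def IsContracting {Y : Type*} [MetricSpace Y] (X : Set Y) : Prop :=
  ∃ C : ℝ, 1 ≤ C ∧ IsContractingWith C X

/-- The orbit of the basepoint under the cyclic group generated by `h`. -/
def cyclicOrbit {Y G : Type*} [MetricSpace Y] [Group G] [MulAction G Y]
    (o : Y) (h : G) : Set Y :=
  {y | ∃ n : ℤ, y = h ^ n • o}

/-- `g` is a contracting element for the action with basepoint `o`. -/
def IsContractingElement {Y G : Type*} [MetricSpace Y] [Group G] [MulAction G Y]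
    (o : Y) (g : G) : Prop :=
  ¬ IsOfFinOrder g ∧ IsContracting (cyclicOrbit o g) ∧
    ∃ c : ℝ, 1 ≤ c ∧ ∀ m n : ℤ,
      (|m - n| : ℝ) / c - c ≤ dist (g ^ m • o) (g ^ n • o) ∧
        dist (g ^ m • o) (g ^ n • o) ≤ c * (|m - n| : ℝ) + c

universe v

/-- A group is non-elementary if it has no finite-index subgroup isomorphic to `ℤ`
or to the trivial group. -/
def NonElementary (G : Type*) [Group G] : Prop :=
  ¬ ∃ H : Subgroup G, H.index ≠ 0 ∧
    (Nonempty (H ≃* Multiplicative ℤ) ∨ Nonempty (H ≃* PUnit.{v+1}))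

/-- The critical exponent of a subset `Γ ⊆ G` for the action with basepoint `o`. -/
noncomputable def critExp {Y G : Type*} [MetricSpace Y] [Group G] [MulAction G Y]
    (o : Y) (Γ : Set G) : ℝ :=
  Filter.limsup
    (fun n : ℕ => Real.log ({g ∈ Γ | dist o (g • o) ≤ (n : ℝ)}.ncard) / (n : ℝ))
    Filter.atTop

/-- The concave region `𝒪_M`: elements `g` such that some geodesic between
`B(o,M)` and `B(g·o,M)` has its interior outside the `M`-neighborhood of the orbit. -/
def concaveRegion {Y : Type*} (G : Type*) [MetricSpace Y] [Group G] [MulAction G Y]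
    (o : Y) (M : ℝ) : Set G :=
  {g | ∃ γ : GeodesicSegment Y,
    γ.source ∈ Metric.closedBall o M ∧ γ.target ∈ Metric.closedBall (g • o) M ∧
    ∀ t ∈ Set.Ioo (0 : ℝ) γ.len, M < Metric.infDist (γ.f t) (MulAction.orbit G o)}

/-- Statistically convex-cocompact (SCC) action. -/
def IsSCC {Y : Type*} (G : Type*) [MetricSpace Y] [Group G] [MulAction G Y]
    (o : Y) : Prop :=
  ∃ M : ℝ, 0 < M ∧ critExp o (concaveRegion G o M) < critExp o (Set.univ : Set G)

/-- A geodesic contains no `(ε, f)`-barrier. -/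
def BarrierFree {Y G : Type*} [MetricSpace Y] [Group G] [MulAction G Y]
    (o : Y) (ε : ℝ) (f : G) (γ : GeodesicSegment Y) : Prop :=
  ¬ ∃ h : G, Metric.infDist (h • o) γ.image ≤ ε ∧
      Metric.infDist ((h * f) • o) γ.image ≤ ε

/-- The set `𝒱_{ε,M,f}` of `(ε, M, f)`-barrier-free elements. -/
def barrierFreeSet {Y G : Type*} [MetricSpace Y] [Group G] [MulAction G Y]
    (o : Y) (ε M : ℝ) (f : G) : Set G :=
  {g | ∃ γ : GeodesicSegment Y, γ.source ∈ Metric.closedBall o M ∧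
    γ.target ∈ Metric.closedBall (g • o) M ∧ BarrierFree o ε f γ}

/-- The subgroup-like set `E(h)` of elements commensurating the orbit of `⟨h⟩`. -/
def Egroup {Y G : Type*} [MetricSpace Y] [Group G] [MulAction G Y]
    (o : Y) (h : G) : Set G :=
  {g | ∃ r : ℝ, 0 < r ∧
    (∀ y ∈ (g • ·) '' cyclicOrbit o h, Metric.infDist y (cyclicOrbit o h) ≤ r) ∧
    (∀ y ∈ cyclicOrbit o h, Metric.infDist y ((g • ·) '' cyclicOrbit o h) ≤ r)}

/-- The axis `Ax(h) = E(h)·o` of a contracting element. -/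
def axisSet {Y G : Type*} [MetricSpace Y] [Group G] [MulAction G Y]
    (o : Y) (h : G) : Set Y :=
  (fun g : G => g • o) '' Egroup o h

/-!
For `g` normalizing `H`, the translate `g • (H • o) = H • (g • o)` stays at the constant distance
`R = d(g • o, H • o)` from `H • o` and contains points arbitrarily far apart. A geodesic between
two such points either stays `C`-far from `H • o`, and then contraction bounds its length by
`2R + C`, or comes `C`-close to `H • o`; being also `4C`-close to the contracting set
`g • (H • o)` (quasiconvexity), it then forces `R ≤ 5C`. So the orbit of the normalizer lies in
the `5C`-neighbourhood of `H • o`: properness of the action makes `N(H) / H` finite, and a set at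
bounded Hausdorff distance from a contracting subset is contracting.
-/

open Bornology

namespace GeodesicSegment

variable {Y : Type*} [MetricSpace Y] (γ : GeodesicSegment Y)

theorem dist_apply_of_le {s t : ℝ} (hs : 0 ≤ s) (hst : s ≤ t) (ht : t ≤ γ.len) :
    dist (γ.f s) (γ.f t) = t - s := by
  rw [γ.isom s ⟨hs, hst.trans ht⟩ t ⟨hs.trans hst, ht⟩, abs_sub_comm, abs_of_nonneg (by linarith)]

theorem dist_source_target : dist γ.source γ.target = γ.len := by
  simpa [source, target] using γ.dist_apply_of_le le_rfl γ.len_nonneg le_rfl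

theorem lipschitzOnWith : LipschitzOnWith 1 γ.f (Icc 0 γ.len) :=
  LipschitzOnWith.of_dist_le_mul fun s hs t ht => by simp [γ.isom s hs t ht, Real.dist_eq]

theorem isBounded_image : IsBounded γ.image :=
  (isCompact_Icc.image_of_continuousOn γ.lipschitzOnWith.continuousOn).isBounded

theorem continuousOn_infDist (X : Set Y) :
    ContinuousOn (fun s => infDist (γ.f s) X) (Icc 0 γ.len) :=
  (continuous_infDist_pt X).comp_continuousOn γ.lipschitzOnWith.continuousOn

def restrict (a b : ℝ) (ha : 0 ≤ a) (hab : a ≤ b) (hb : b ≤ γ.len) : GeodesicSegment Y where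
  len := b - a
  len_nonneg := sub_nonneg.2 hab
  f t := γ.f (a + t)
  isom s hs t ht := by
    rw [γ.isom (a + s) ⟨by linarith [hs.1], by linarith [hs.2]⟩ (a + t)
      ⟨by linarith [ht.1], by linarith [ht.2]⟩, add_sub_add_left_eq_sub]

theorem image_restrict {a b : ℝ} (ha : 0 ≤ a) (hab : a ≤ b) (hb : b ≤ γ.len) :
    (γ.restrict a b ha hab hb).image = γ.f '' Icc a b := by
  ext y
  constructor
  · rintro ⟨t, ⟨ht₀, ht₁ : t ≤ b - a⟩, rfl⟩
    exact ⟨a + t, ⟨by linarith, by linarith⟩, rfl⟩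
  · rintro ⟨t, ⟨hat, htb⟩, rfl⟩
    exact ⟨t - a, ⟨by linarith, show t - a ≤ b - a by linarith⟩, by simp [restrict]⟩

def map (φ : Y → Y) (hφ : Isometry φ) : GeodesicSegment Y where
  len := γ.len
  len_nonneg := γ.len_nonneg
  f t := φ (γ.f t)
  isom s hs t ht := by rw [hφ.dist_eq, γ.isom s hs t ht]

theorem image_map (φ : Y → Y) (hφ : Isometry φ) : (γ.map φ hφ).image = φ '' γ.image :=
  (image_image φ γ.f _).symm

end GeodesicSegment

section Projection

variable {Y : Type*} [MetricSpace Y] {X : Set Y}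

theorem proj_image (e : Y ≃ᵢ Y) (X : Set Y) (y : Y) : proj (e '' X) (e y) = e '' proj X y := by
  ext x
  constructor
  · rintro ⟨⟨u, hu, rfl⟩, hd⟩
    rw [infDist_image e.isometry, e.dist_eq] at hd
    exact ⟨u, ⟨hu, hd⟩, rfl⟩
  · rintro ⟨u, ⟨hu, hd⟩, rfl⟩
    exact ⟨⟨u, hu, rfl⟩, by rw [infDist_image e.isometry, e.dist_eq, hd]⟩

theorem nonempty_proj_image (e : Y ≃ᵢ Y) (hX : ∀ y, (proj X y).Nonempty) (y : Y) :
    (proj (e '' X) y).Nonempty := by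
  rw [← e.apply_symm_apply y, proj_image]
  exact (hX (e.symm y)).image e

theorem isBounded_projSet {A : Set Y} (hX : X.Nonempty) (hA : IsBounded A) :
    IsBounded (projSet X A) := by
  obtain ⟨x₀, hx₀⟩ := hX
  obtain ⟨r, hr⟩ := hA.subset_closedBall x₀
  refine (isBounded_closedBall (x := x₀) (r := 2 * r)).subset ?_
  simp only [projSet, iUnion_subset_iff]
  intro a ha x hx
  have hax : dist a x ≤ dist a x₀ := hx.2 ▸ infDist_le_dist_of_mem hx₀
  have hax₀ : dist a x₀ ≤ r := hr ha
  rw [mem_closedBall]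
  linarith [dist_triangle x a x₀, dist_comm x a]

theorem nonempty_proj_of_finite (hne : X.Nonempty) {y : Y}
    (hfin : ∀ r, (X ∩ closedBall y r).Finite) : (proj X y).Nonempty := by
  obtain ⟨x₀, hx₀⟩ := hne
  obtain ⟨x, ⟨hxX, -⟩, hmin⟩ := exists_min_image _ (dist y) (hfin (dist x₀ y))
    ⟨x₀, hx₀, mem_closedBall.2 le_rfl⟩
  refine ⟨x, hxX, le_antisymm ?_ (infDist_le_dist_of_mem hxX)⟩
  by_contra! hlt
  obtain ⟨z, hz, hzx⟩ := (infDist_lt_iff ⟨x₀, hx₀⟩).1 hlt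
  have hzx₀ : dist z y ≤ dist x₀ y := by
    linarith [hmin x₀ ⟨hx₀, mem_closedBall.2 le_rfl⟩, dist_comm z y, dist_comm x₀ y]
  exact (hmin z ⟨hz, mem_closedBall.2 hzx₀⟩).not_gt hzx

end Projection

section IntermediateValue

variable {f : ℝ → ℝ} {a b c : ℝ}

theorem ContinuousOn.exists_last_eq (hf : ContinuousOn f (Icc a b)) (hab : a ≤ b)
    (ha : f a ≤ c) (hb : c ≤ f b) : ∃ s ∈ Icc a b, f s = c ∧ ∀ u ∈ Icc s b, c ≤ f u := by
  set S := Icc a b ∩ f ⁻¹' {c}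
  have hS : IsClosed S := hf.preimage_isClosed_of_isClosed isClosed_Icc isClosed_singleton
  have hSne : S.Nonempty := intermediate_value_Icc hab hf ⟨ha, hb⟩
  have hSbdd : BddAbove S := ⟨b, fun s hs => hs.1.2⟩
  obtain ⟨hsI, hsc⟩ := hS.csSup_mem hSne hSbdd
  refine ⟨sSup S, hsI, hsc, fun u hu => ?_⟩
  by_contra! hlt
  obtain ⟨w, hw, hwc⟩ := intermediate_value_Icc hu.2 (hf.mono (Icc_subset_Icc
    (hsI.1.trans hu.1) le_rfl)) ⟨hlt.le, hb⟩
  have hwu : w = u := le_antisymm ((le_csSup hSbdd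
    ⟨⟨hsI.1.trans (hu.1.trans hw.1), hw.2⟩, hwc⟩).trans hu.1) hw.1
  exact hlt.ne (hwu ▸ hwc)

theorem ContinuousOn.exists_first_eq (hf : ContinuousOn f (Icc a b)) (hab : a ≤ b)
    (ha : c ≤ f a) (hb : f b ≤ c) : ∃ s ∈ Icc a b, f s = c ∧ ∀ u ∈ Icc a s, c ≤ f u := by
  have hf' : ContinuousOn (f ∘ Neg.neg) (Icc (-b) (-a)) :=
    hf.comp continuousOn_neg fun u hu => ⟨le_neg.1 hu.2, neg_le.1 hu.1⟩
  obtain ⟨s, hs, hfs, hfar⟩ := hf'.exists_last_eq (neg_le_neg hab) (by simpa using hb)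
    (by simpa using ha)
  refine ⟨-s, ⟨le_neg.2 hs.2, neg_le.1 hs.1⟩, hfs, fun u hu => ?_⟩
  simpa using hfar (-u) ⟨le_neg.1 hu.2, neg_le_neg hu.1⟩

end IntermediateValue

namespace IsContractingWith

variable {Y : Type*} [MetricSpace Y] {C : ℝ} {X : Set Y}

/-- `diam` is `0` on unbounded sets, so the bound on `diam (projSet X γ.image)` only controls
distances once that projection is known to be bounded. -/
theorem dist_le_of_mem_proj (h : IsContractingWith C X) (hX : X.Nonempty) (γ : GeodesicSegment Y)
    (hfar : ∀ p ∈ γ.image, C ≤ infDist p X) {a b xa xb : Y} (ha : a ∈ γ.image)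
    (hb : b ∈ γ.image) (hxa : xa ∈ proj X a) (hxb : xb ∈ proj X b) : dist xa xb ≤ C :=
  (dist_le_diam_of_mem (isBounded_projSet hX γ.isBounded_image) (mem_biUnion ha hxa)
    (mem_biUnion hb hxb)).trans (h γ hfar)

theorem dist_le_of_mem_proj_of_far_on (h : IsContractingWith C X) (hX : X.Nonempty)
    (γ : GeodesicSegment Y) {s t : ℝ} (hs : 0 ≤ s) (hst : s ≤ t) (ht : t ≤ γ.len)
    (hfar : ∀ u ∈ Icc s t, C ≤ infDist (γ.f u) X) {xs xt : Y} (hxs : xs ∈ proj X (γ.f s))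
    (hxt : xt ∈ proj X (γ.f t)) : dist xs xt ≤ C := by
  have himage := γ.image_restrict hs hst ht
  refine h.dist_le_of_mem_proj hX (γ.restrict s t hs hst ht) ?_ (himage ▸ ⟨s, ⟨le_rfl, hst⟩, rfl⟩)
    (himage ▸ ⟨t, ⟨hst, le_rfl⟩, rfl⟩) hxs hxt
  rw [himage]
  rintro _ ⟨u, hu, rfl⟩
  exact hfar u hu

theorem sub_le_of_far_on (h : IsContractingWith C X) (hproj : ∀ y, (proj X y).Nonempty)
    (γ : GeodesicSegment Y) {s t : ℝ} (hs : 0 ≤ s) (hst : s ≤ t) (ht : t ≤ γ.len)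
    (hfar : ∀ u ∈ Icc s t, C ≤ infDist (γ.f u) X) :
    t - s ≤ infDist (γ.f s) X + C + infDist (γ.f t) X := by
  obtain ⟨xs, hxs⟩ := hproj (γ.f s)
  obtain ⟨xt, hxt⟩ := hproj (γ.f t)
  have hst' := h.dist_le_of_mem_proj_of_far_on ⟨xs, hxs.1⟩ γ hs hst ht hfar hxs hxt
  calc t - s = dist (γ.f s) (γ.f t) := (γ.dist_apply_of_le hs hst ht).symm
    _ ≤ dist (γ.f s) xs + dist xs xt + dist xt (γ.f t) := dist_triangle4 _ _ _ _
    _ ≤ infDist (γ.f s) X + C + infDist (γ.f t) X := by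
      rw [hxs.2, dist_comm xt, hxt.2]
      linarith

theorem image (h : IsContractingWith C X) (e : Y ≃ᵢ Y) : IsContractingWith C (e '' X) := by
  intro γ hfar
  set γ' := γ.map e.symm e.symm.isometry
  have hX : e.symm '' (e '' X) = X := e.symm_image_image X
  have hfar' : ∀ p ∈ γ'.image, C ≤ infDist p X := by
    rw [γ.image_map]
    rintro _ ⟨q, hq, rfl⟩
    rw [← hX, infDist_image e.symm.isometry]
    exact hfar q hq
  have hprojSet : projSet (e '' X) γ.image = e '' projSet X γ'.image := by
    rw [γ.image_map]
    simp only [projSet, image_iUnion₂, biUnion_image]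
    refine iUnion₂_congr fun q _ => ?_
    rw [← proj_image, e.apply_symm_apply]
  rw [hprojSet, e.isometry.diam_image]
  exact h γ' hfar'

/-- Quasiconvexity: around a parameter where `γ` is `C`-far from `X`, the maximal subsegment
staying `C`-far has endpoints exactly `C` away, so contraction bounds its length by `3C`. -/
theorem infDist_le_of_source_target_mem (h : IsContractingWith C X) (hC : 0 ≤ C)
    (hproj : ∀ y, (proj X y).Nonempty) (γ : GeodesicSegment Y) (hs : γ.source ∈ X)
    (ht : γ.target ∈ X) {u : ℝ} (hu : u ∈ Icc 0 γ.len) : infDist (γ.f u) X ≤ 4 * C := by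
  set F := fun s => infDist (γ.f s) X
  rcases lt_or_ge (F u) C with hlt | hle
  · linarith
  have hF := γ.continuousOn_infDist X
  have hF₀ : F 0 ≤ C := (infDist_zero_of_mem hs).trans_le hC
  have hFlen : F γ.len ≤ C := (infDist_zero_of_mem ht).trans_le hC
  obtain ⟨a, ha, hFa, hfar_a⟩ :=
    (hF.mono (Icc_subset_Icc le_rfl hu.2)).exists_last_eq hu.1 hF₀ hle
  obtain ⟨b, hb, hFb, hfar_b⟩ :=
    (hF.mono (Icc_subset_Icc hu.1 le_rfl)).exists_first_eq hu.2 hle hFlen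
  have hfar : ∀ v ∈ Icc a b, C ≤ F v := fun v hv =>
    (le_total v u).elim (fun hvu => hfar_a v ⟨hv.1, hvu⟩) (fun huv => hfar_b v ⟨huv, hv.2⟩)
  have hba := h.sub_le_of_far_on hproj γ ha.1 (ha.2.trans hb.1) hb.2 hfar
  have hFu : F u ≤ F a + (u - a) := by
    have := infDist_le_infDist_add_dist (x := γ.f u) (y := γ.f a) (s := X)
    rwa [dist_comm, γ.dist_apply_of_le ha.1 ha.2 hu.2] at this
  simp only [F] at hFa hFb hFu ⊢
  linarith [hb.1]

/-- Follow a geodesic from `a` towards `p`: while it stays `C`-far from `X`, projections to `X`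
move by at most `C`; once it is `C`-close, `p ∈ proj X' a` forces the rest to have length
at most `C`. -/
theorem dist_le_of_mem_proj_of_subset (h : IsContractingWith C X) (hC : 0 ≤ C)
    (hgeo : GeodesicSpace Y) (hproj : ∀ y, (proj X y).Nonempty) {X' : Set Y} (hXX' : X ⊆ X')
    {a p xa : Y} (ha : C ≤ infDist a X') (hp : p ∈ proj X' a) (hxa : xa ∈ proj X a) :
    dist xa p ≤ 3 * C + infDist p X := by
  have hX : X.Nonempty := ⟨xa, hxa.1⟩
  obtain ⟨δ, hδa, hδp⟩ := hgeo a p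
  have hδa' : δ.f 0 = a := hδa
  have hδp' : δ.f δ.len = p := hδp
  have hlen : δ.len = infDist a X' := by rw [← hp.2, ← δ.dist_source_target, hδa, hδp]
  have hX'X : infDist a X' ≤ infDist a X := infDist_le_infDist_of_subset hXX' hX
  by_cases hfar : ∀ s ∈ Icc 0 δ.len, C ≤ infDist (δ.f s) X
  · obtain ⟨z, hz⟩ := hproj p
    have hxaz := h.dist_le_of_mem_proj_of_far_on hX δ le_rfl δ.len_nonneg le_rfl hfar
      (hδa' ▸ hxa) (hδp' ▸ hz)
    linarith [dist_triangle xa z p, hz.2, dist_comm p z]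
  push Not at hfar
  obtain ⟨t₀, ht₀, hlt⟩ := hfar
  obtain ⟨t, ht, hFt, hfar_t⟩ := ((δ.continuousOn_infDist X).mono
    (Icc_subset_Icc le_rfl ht₀.2)).exists_first_eq ht₀.1 (by rw [hδa']; linarith) hlt.le
  obtain ⟨z, hz⟩ := hproj (δ.f t)
  have hxaz := h.dist_le_of_mem_proj_of_far_on hX δ le_rfl ht.1 (ht.2.trans ht₀.2) hfar_t
    (hδa' ▸ hxa) hz
  have hat := δ.dist_apply_of_le le_rfl ht.1 (ht.2.trans ht₀.2)
  have htp := δ.dist_apply_of_le ht.1 (ht.2.trans ht₀.2) le_rfl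
  rw [hδa'] at hat
  rw [hδp'] at htp
  have haz : infDist a X ≤ dist a z := infDist_le_dist_of_mem hz.1
  linarith [dist_triangle a (δ.f t) z, dist_triangle4 xa z (δ.f t) p, hz.2, dist_comm z (δ.f t),
    infDist_nonneg (x := p) (s := X)]

theorem of_subset_of_infDist_le (h : IsContractingWith C X) (hC : 0 ≤ C) (hgeo : GeodesicSpace Y)
    (hproj : ∀ y, (proj X y).Nonempty) {X' : Set Y} (hXX' : X ⊆ X') {r : ℝ}
    (hclose : ∀ y ∈ X', infDist y X ≤ r) : IsContractingWith (7 * C + 2 * r) X' := by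
  intro γ hfar
  obtain ⟨x₀, hx₀, -⟩ := hproj γ.source
  have hr : 0 ≤ r := infDist_nonneg.trans (hclose x₀ (hXX' hx₀))
  have hfarX' : ∀ p ∈ γ.image, C ≤ infDist p X' := fun p hp => by linarith [hfar p hp]
  have hfarX : ∀ p ∈ γ.image, C ≤ infDist p X := fun p hp =>
    (hfarX' p hp).trans (infDist_le_infDist_of_subset hXX' ⟨x₀, hx₀⟩)
  refine diam_le_of_forall_dist_le (by linarith) ?_
  simp only [projSet, mem_iUnion₂]
  rintro p ⟨a, ha, hpa⟩ q ⟨b, hb, hqb⟩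
  obtain ⟨xa, hxa⟩ := hproj a
  obtain ⟨xb, hxb⟩ := hproj b
  have hab := h.dist_le_of_mem_proj ⟨x₀, hx₀⟩ γ hfarX ha hb hxa hxb
  have hpa' := h.dist_le_of_mem_proj_of_subset hC hgeo hproj hXX' (hfarX' a ha) hpa hxa
  have hqb' := h.dist_le_of_mem_proj_of_subset hC hgeo hproj hXX' (hfarX' b hb) hqb hxb
  linarith [dist_triangle4 p xa xb q, dist_comm p xa, hclose p hpa.1, hclose q hqb.1]

theorem le_of_forall_infDist_eq (h : IsContractingWith C X) (hC : 0 ≤ C) (hgeo : GeodesicSpace Y)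
    (hproj : ∀ y, (proj X y).Nonempty) {X' : Set Y} (h' : IsContractingWith C X')
    (hproj' : ∀ y, (proj X' y).Nonempty) {R : ℝ} (hR : ∀ q ∈ X', infDist q X = R) {x y : Y}
    (hx : x ∈ X') (hy : y ∈ X') (hxy : 2 * R + C < dist x y) : R ≤ 5 * C := by
  obtain ⟨γ, hγx, hγy⟩ := hgeo x y
  by_cases hfar : ∀ s ∈ Icc 0 γ.len, C ≤ infDist (γ.f s) X
  · have hlen := h.sub_le_of_far_on hproj γ le_rfl γ.len_nonneg le_rfl hfar
    have hγ : γ.len = dist x y := by rw [← hγx, ← hγy, γ.dist_source_target]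
    rw [show γ.f 0 = x from hγx, show γ.f γ.len = y from hγy, hR x hx, hR y hy, hγ] at hlen
    linarith
  push Not at hfar
  obtain ⟨s, hs, hlt⟩ := hfar
  obtain ⟨q, hq⟩ := hproj' (γ.f s)
  have hsq : dist (γ.f s) q ≤ 4 * C := hq.2 ▸
    h'.infDist_le_of_source_target_mem hC hproj' γ (hγx ▸ hx) (hγy ▸ hy) hs
  linarith [hR q hq.1, infDist_le_infDist_add_dist (x := q) (y := γ.f s) (s := X),
    dist_comm q (γ.f s)]

end IsContractingWith

theorem Subgroup.relIndex_ne_zero_of_forall_exists_mul_mem {G : Type*} [Group G]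
    {H K : Subgroup G} (hHK : H ≤ K) {S : Set G} (hS : S.Finite)
    (hcover : ∀ g ∈ K, ∃ h ∈ H, g * h ∈ S) : H.relIndex K ≠ 0 := by
  have : Finite {k : K | (k : G) ∈ S} := (hS.preimage Subtype.val_injective.injOn).to_subtype
  have : Finite (K ⧸ H.subgroupOf K) := by
    refine Finite.of_surjective (fun k : {k : K | (k : G) ∈ S} => (k.1 : K ⧸ H.subgroupOf K)) ?_
    intro q
    induction q using QuotientGroup.induction_on with
    | H g =>
      obtain ⟨h, hh, hgh⟩ := hcover g g.2
      refine ⟨⟨⟨g * h, K.mul_mem g.2 (hHK hh)⟩, hgh⟩, ?_⟩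
      rw [QuotientGroup.eq, Subgroup.mem_subgroupOf]
      simpa using H.inv_mem hh
  exact Subgroup.index_ne_zero_of_finite

section Orbit

variable {Y G : Type*} [MetricSpace Y] [Group G] [MulAction G Y] {o : Y}

theorem finite_image_smul_inter_closedBall (hproper : ∀ r : ℝ, {g : G | dist o (g • o) ≤ r}.Finite)
    (S : Set G) (y : Y) (r : ℝ) : ((fun g : G => g • o) '' S ∩ closedBall y r).Finite := by
  refine ((hproper (r + dist o y)).image (· • o)).subset ?_
  rintro _ ⟨⟨g, -, rfl⟩, hg : dist (g • o) y ≤ r⟩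
  refine ⟨g, show dist o (g • o) ≤ r + dist o y from ?_, rfl⟩
  linarith [dist_triangle o y (g • o), dist_comm y (g • o)]

theorem nonempty_proj_image_smul (hproper : ∀ r : ℝ, {g : G | dist o (g • o) ≤ r}.Finite)
    {S : Set G} (hS : S.Nonempty) (y : Y) : (proj ((fun g : G => g • o) '' S) y).Nonempty :=
  nonempty_proj_of_finite (hS.image _) (finite_image_smul_inter_closedBall hproper S y)

theorem exists_lt_dist_smul (hproper : ∀ r : ℝ, {g : G | dist o (g • o) ≤ r}.Finite)
    {S : Set G} (hS : S.Infinite) (r : ℝ) : ∃ g ∈ S, r < dist o (g • o) := by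
  by_contra! h
  exact hS ((hproper r).subset h)

variable [IsIsometricSMul G Y]

theorem exists_mul_mem_dist_smul_le (hproper : ∀ r : ℝ, {g : G | dist o (g • o) ≤ r}.Finite)
    {H : Subgroup G} {g : G} {r : ℝ}
    (hg : infDist (g⁻¹ • o) ((fun k : G => k • o) '' H) ≤ r) :
    ∃ h ∈ H, dist o ((g * h) • o) ≤ r := by
  obtain ⟨_, ⟨h, hh, rfl⟩, hd⟩ := nonempty_proj_image_smul hproper ⟨1, H.one_mem⟩ (g⁻¹ • o)
  refine ⟨h, hh, ?_⟩
  rw [mul_smul, ← dist_smul g⁻¹, inv_smul_smul, hd]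
  exact hg

theorem infDist_smul_image_smul_subgroup {H : Subgroup G} {h : G} (hh : h ∈ H) (y : Y) :
    infDist (h • y) ((fun k : G => k • o) '' H) = infDist y ((fun k : G => k • o) '' H) := by
  have hX : (h • ·) '' ((fun k : G => k • o) '' (H : Set G)) = (fun k : G => k • o) '' H := by
    rw [image_image]
    ext x
    constructor
    · rintro ⟨k, hk, rfl⟩
      exact ⟨h * k, H.mul_mem hh hk, mul_smul h k o⟩
    · rintro ⟨k, hk, rfl⟩
      exact ⟨h⁻¹ * k, H.mul_mem (H.inv_mem hh) hk, by simp [smul_smul]⟩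
  rw [← hX, infDist_image (isometry_smul Y h), hX]

theorem infDist_smul_le_of_mem_normalizer (hgeo : GeodesicSpace Y)
    (hproper : ∀ r : ℝ, {g : G | dist o (g • o) ≤ r}.Finite) {H : Subgroup G}
    (hH : (H : Set G).Infinite) {C : ℝ} (hC : 0 ≤ C)
    (hHC : IsContractingWith C ((fun k : G => k • o) '' H)) {g : G}
    (hg : g ∈ Subgroup.normalizer (H : Set G)) :
    infDist (g • o) ((fun k : G => k • o) '' H) ≤ 5 * C := by
  set X := (fun k : G => k • o) '' (H : Set G)
  set e : Y ≃ᵢ Y := IsometryEquiv.constSMul g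
  have hproj := nonempty_proj_image_smul hproper (S := H) ⟨1, H.one_mem⟩
  obtain ⟨h₁, hh₁, hfar⟩ := exists_lt_dist_smul hproper hH (2 * infDist (g • o) X + C)
  refine hHC.le_of_forall_infDist_eq hC hgeo hproj (hHC.image e) (nonempty_proj_image e hproj) ?_
    (x := e o) (y := e (h₁ • o)) ⟨o, ⟨1, H.one_mem, one_smul G o⟩, rfl⟩ ⟨_, ⟨h₁, hh₁, rfl⟩, rfl⟩
    (by rwa [e.dist_eq])
  rintro _ ⟨_, ⟨k, hk, rfl⟩, rfl⟩
  have hconj : g * k * g⁻¹ ∈ H := (Subgroup.mem_normalizer_iff.1 hg k).1 hk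
  calc infDist (e (k • o)) X = infDist ((g * k * g⁻¹) • g • o) X := by
        simp [e, smul_smul]
    _ = infDist (g • o) X := infDist_smul_image_smul_subgroup hconj _

end Orbit

theorem contracting_subgroup_normalizer_general
    {Y G : Type*} [MetricSpace Y] [Group G] [MulAction G Y]
    (hgeo : GeodesicSpace Y)
    (hiso : ∀ g : G, Isometry (fun y : Y => g • y))
    (o : Y)
    (hproper : ∀ r : ℝ, {g : G | dist o (g • o) ≤ r}.Finite)
    (H : Subgroup G)
    (hHinf : (H : Set G).Infinite)
    (hHc : IsContracting ((fun g : G => g • o) '' (H : Set G))) :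
    H.relIndex (Subgroup.normalizer (H : Set G)) ≠ 0 ∧
      IsContracting ((fun g : G => g • o) '' (Subgroup.normalizer (H : Set G) : Set G)) := by
  have : IsIsometricSMul G Y := ⟨hiso⟩
  obtain ⟨C, hC, hHC⟩ := hHc
  have hclose : ∀ g ∈ Subgroup.normalizer (H : Set G),
      infDist (g • o) ((fun k : G => k • o) '' H) ≤ 5 * C := fun g hg =>
    infDist_smul_le_of_mem_normalizer hgeo hproper hHinf (by linarith) hHC hg
  refine ⟨?_, 7 * C + 2 * (5 * C), by linarith, ?_⟩
  · exact Subgroup.relIndex_ne_zero_of_forall_exists_mul_mem Subgroup.le_normalizer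
      (hproper (5 * C)) fun g hg => exists_mul_mem_dist_smul_le hproper (hclose g⁻¹ (inv_mem hg))
  · refine hHC.of_subset_of_infDist_le (by linarith) hgeo
      (nonempty_proj_image_smul hproper ⟨1, H.one_mem⟩) (image_mono Subgroup.le_normalizer) ?_
    rintro _ ⟨g, hg, rfl⟩
    exact hclose g hg

/-- a contracting subgroup has finite index in its normalizer,
and the normalizer is contracting. -/
theorem contracting_subgroup_normalizer
    {Y G : Type*} [MetricSpace Y] [ProperSpace Y] [Group G] [MulAction G Y]
    (hgeo : GeodesicSpace Y)
    (hiso : ∀ g : G, Isometry (fun y : Y => g • y))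
    (o : Y)
    (hproper : ∀ r : ℝ, {g : G | dist o (g • o) ≤ r}.Finite)
    (H : Subgroup G)
    (hHinf : (H : Set G).Infinite)
    (hHc : IsContracting ((fun g : G => g • o) '' (H : Set G))) :
    H.relIndex (Subgroup.normalizer (H : Set G)) ≠ 0 ∧
      IsContracting ((fun g : G => g • o) '' (Subgroup.normalizer (H : Set G) : Set G)) :=
  contracting_subgroup_normalizer_general hgeo hiso o hproper H hHinf hHc
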